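/- arXiv:0801.2408 — 7 statements merged into one kernel-verified Lean document; each statement's English description precedes it below -/
import Mathlib

section
/- For all real numbers r₁ > 0, r₂ > 0 and x₁, x₂ ∈ ℝ with (r₁, x₁) ≠ (r₂, x₂), the integral I := ∫₀^{π/2} cos(2σ) / Δ₁₂(σ)^{3/2} dσ is strictly positive. -/
open Real intervalIntegral

lemma stmt0_aux (c a : ℝ) (hc : 0 < c) (ha : 0 < a) :
    0 < ∫ σ in (0:ℝ)..(π/2),
      Real.cos (2 * σ) / (c + a * Real.sin σ ^ 2) ^ ((3:ℝ)/2) := by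
  set g : ℝ → ℝ := fun σ => Real.cos (2 * σ) / (c + a * Real.sin σ ^ 2) ^ ((3:ℝ)/2) with hg
  have hden : ∀ σ : ℝ, 0 < c + a * Real.sin σ ^ 2 := fun σ => by nlinarith [sq_nonneg (Real.sin σ)]
  have hgc : Continuous g := by
    apply Continuous.div (by continuity)
      ((continuous_const.add (continuous_const.mul ((Real.continuous_sin).pow 2))).rpow_const
        (fun x => Or.inr (by norm_num)))
    intro x
    exact (Real.rpow_pos_of_pos (hden x) _).ne'
  have hint : ∀ u v : ℝ, IntervalIntegrable g MeasureTheory.volume u v :=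
    fun u v => hgc.intervalIntegrable u v
  have hsplit : (∫ σ in (0:ℝ)..(π/2), g σ)
      = (∫ σ in (0:ℝ)..(π/4), g σ) + ∫ σ in (π/4)..(π/2), g σ :=
    (integral_add_adjacent_intervals (hint _ _) (hint _ _)).symm
  have h2 : (∫ σ in (π/4)..(π/2), g σ) = ∫ σ in (0:ℝ)..(π/4), g (π/2 - σ) := by
    rw [integral_comp_sub_left g (π/2)]
    congr 1 <;> ring
  have hint2 : IntervalIntegrable (fun σ => g (π/2 - σ)) MeasureTheory.volume 0 (π/4) :=
    (hgc.comp (by continuity)).intervalIntegrable _ _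
  have hcomb : (∫ σ in (0:ℝ)..(π/4), g σ) + (∫ σ in (0:ℝ)..(π/4), g (π/2 - σ))
      = ∫ σ in (0:ℝ)..(π/4), (g σ + g (π/2 - σ)) :=
    (integral_add (hint _ _) hint2).symm
  rw [hsplit, h2, hcomb]
  apply intervalIntegral_pos_of_pos_on ((hint _ _).add hint2)
  · intro σ hσ
    obtain ⟨h0, h4⟩ := hσ
    have hπ := Real.pi_pos
    have hcos2 : 0 < Real.cos (2 * σ) :=
      Real.cos_pos_of_mem_Ioo ⟨by linarith, by linarith⟩
    have hsq : Real.sin σ ^ 2 < Real.cos σ ^ 2 := by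
      have := Real.cos_two_mul' σ
      linarith
    have hD1 : 0 < c + a * Real.sin σ ^ 2 := hden σ
    have hD2lt : c + a * Real.sin σ ^ 2 < c + a * Real.cos σ ^ 2 := by nlinarith
    have hR : (c + a * Real.sin σ ^ 2) ^ ((3:ℝ)/2) < (c + a * Real.cos σ ^ 2) ^ ((3:ℝ)/2) :=
      Real.rpow_lt_rpow hD1.le hD2lt (by norm_num)
    have hR1 : 0 < (c + a * Real.sin σ ^ 2) ^ ((3:ℝ)/2) := Real.rpow_pos_of_pos hD1 _
    have key : g σ + g (π/2 - σ)
        = Real.cos (2 * σ) / (c + a * Real.sin σ ^ 2) ^ ((3:ℝ)/2)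
          - Real.cos (2 * σ) / (c + a * Real.cos σ ^ 2) ^ ((3:ℝ)/2) := by
      simp only [hg]
      rw [show 2 * (π/2 - σ) = π - 2 * σ by ring, Real.cos_pi_sub, Real.sin_pi_div_two_sub]
      ring
    rw [key]
    have := div_lt_div_of_pos_left hcos2 hR1 hR
    linarith
  · linarith [Real.pi_pos]

/-- For all `r₁, r₂ > 0` and `x₁, x₂ ∈ ℝ` with `(r₁, x₁) ≠ (r₂, x₂)`, the integral
`I := ∫₀^{π/2} cos(2σ) / Δ₁₂(σ)^{3/2} dσ` is strictly positive, where
`Δ₁₂(σ) := (r₁ − r₂)² + (x₁ − x₂)² + 4 r₁ r₂ sin²σ`. -/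
theorem stmt0 (r₁ r₂ x₁ x₂ : ℝ) (hr₁ : 0 < r₁) (hr₂ : 0 < r₂)
    (hne : (r₁, x₁) ≠ (r₂, x₂)) :
    0 < ∫ σ in (0:ℝ)..(π/2),
      Real.cos (2 * σ) /
        ((r₁ - r₂) ^ 2 + (x₁ - x₂) ^ 2 + 4 * r₁ * r₂ * Real.sin σ ^ 2) ^ ((3:ℝ)/2) := by
  have hc : 0 < (r₁ - r₂) ^ 2 + (x₁ - x₂) ^ 2 := by
    have h : r₁ ≠ r₂ ∨ x₁ ≠ x₂ := by
      by_contra h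
      push_neg at h
      exact hne (by simp [h.1, h.2])
    rcases h with h | h
    · have h0 : r₁ - r₂ ≠ 0 := sub_ne_zero.mpr h
      have h1 : 0 < (r₁ - r₂) ^ 2 := by positivity
      nlinarith [sq_nonneg (x₁ - x₂)]
    · have h0 : x₁ - x₂ ≠ 0 := sub_ne_zero.mpr h
      have h1 : 0 < (x₁ - x₂) ^ 2 := by positivity
      nlinarith [sq_nonneg (r₁ - r₂)]
  have ha : 0 < 4 * r₁ * r₂ := by positivity
  have := stmt0_aux ((r₁ - r₂) ^ 2 + (x₁ - x₂) ^ 2) (4 * r₁ * r₂) hc ha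
  simpa [add_assoc] using this
end

section
/- For all real numbers r > 0, r̂₁ > 0, r̂₂ > 0 with r ≠ r̂₁ and r ≠ r̂₂, and all κ₁, κ₂ > 0, the quantity 4r · Σ_{k=1}^{2} κₖ r̂ₖ ∫₀^{π/2} cos(2σ) / ((r − r̂ₖ)² + 4 r r̂ₖ sin²σ)^{5/2} dσ is strictly positive. -/
open Real intervalIntegral

lemma key_pos (a b : ℝ) (ha : 0 < a) (hb : 0 < b) :
    0 < ∫ σ in (0:ℝ)..(π/2),
        Real.cos (2 * σ) / (a + b * Real.sin σ ^ 2) ^ ((5:ℝ)/2) := by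
  set f : ℝ → ℝ := fun σ => Real.cos (2 * σ) / (a + b * Real.sin σ ^ 2) ^ ((5:ℝ)/2) with hf
  have hpos : ∀ σ : ℝ, 0 < a + b * Real.sin σ ^ 2 := fun σ => by positivity
  have hcont : Continuous f := by
    apply Continuous.div
    · exact Real.continuous_cos.comp (continuous_const.mul continuous_id)
    · exact (continuous_const.add
        (continuous_const.mul (Real.continuous_sin.pow 2))).rpow_const
        fun x => Or.inr (by norm_num)
    · intro x; exact ne_of_gt (Real.rpow_pos_of_pos (hpos x) _)
  have hint : ∀ u v : ℝ, IntervalIntegrable f MeasureTheory.volume u v :=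
    fun u v => hcont.intervalIntegrable u v
  -- split at π/4
  have hsplit : (∫ σ in (0:ℝ)..(π/2), f σ)
      = (∫ σ in (0:ℝ)..(π/4), f σ) + ∫ σ in (π/4:ℝ)..(π/2), f σ :=
    (integral_add_adjacent_intervals (hint 0 (π/4)) (hint (π/4) (π/2))).symm
  have hrefl : (∫ σ in (π/4:ℝ)..(π/2), f σ)
      = ∫ σ in (0:ℝ)..(π/4), f (π/2 - σ) := by
    have := intervalIntegral.integral_comp_sub_left (a := (0:ℝ)) (b := π/4) f (π/2)
    rw [this]
    congr 1 <;> ring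
  have hg : Continuous fun σ : ℝ => f (π/2 - σ) :=
    hcont.comp (continuous_const.sub continuous_id)
  have hcomb : (∫ σ in (0:ℝ)..(π/2), f σ)
      = ∫ σ in (0:ℝ)..(π/4), (f σ + f (π/2 - σ)) := by
    rw [hsplit, hrefl, ← intervalIntegral.integral_add (hint 0 (π/4))
      (hg.intervalIntegrable _ _)]
  rw [hcomb]
  apply intervalIntegral.intervalIntegral_pos_of_pos_on
  · exact (hcont.add hg).intervalIntegrable _ _
  · intro x hx
    obtain ⟨hx0, hx1⟩ := hx
    have hpi := Real.pi_pos
    have hcos2 : 0 < Real.cos (2 * x) := by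
      apply Real.cos_pos_of_mem_Ioo
      constructor <;> [linarith; linarith]
    have hsinlt : Real.sin x < Real.cos x := by
      rw [← Real.sin_pi_div_two_sub]
      apply Real.sin_lt_sin_of_lt_of_le_pi_div_two (by linarith) (by linarith) (by linarith)
    have hsin0 : 0 ≤ Real.sin x := Real.sin_nonneg_of_nonneg_of_le_pi (le_of_lt hx0)
      (by linarith)
    have hAB : a + b * Real.sin x ^ 2 < a + b * Real.cos x ^ 2 := by
      have : Real.sin x ^ 2 < Real.cos x ^ 2 := by
        apply pow_lt_pow_left₀ hsinlt hsin0
        norm_num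
      nlinarith
    have hA : 0 < a + b * Real.sin x ^ 2 := hpos x
    have hrpow : (a + b * Real.sin x ^ 2) ^ ((5:ℝ)/2)
        < (a + b * Real.cos x ^ 2) ^ ((5:ℝ)/2) :=
      Real.rpow_lt_rpow (le_of_lt hA) hAB (by norm_num)
    have hfval : f (π/2 - x) = -Real.cos (2 * x) / (a + b * Real.cos x ^ 2) ^ ((5:ℝ)/2) := by
      simp only [hf]
      rw [show 2 * (π/2 - x) = π - 2 * x by ring, Real.cos_pi_sub,
        Real.sin_pi_div_two_sub]
    have hApow : 0 < (a + b * Real.sin x ^ 2) ^ ((5:ℝ)/2) :=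
      Real.rpow_pos_of_pos hA _
    have hBpow : 0 < (a + b * Real.cos x ^ 2) ^ ((5:ℝ)/2) :=
      Real.rpow_pos_of_pos (by positivity) _
    have hlt : Real.cos (2 * x) / (a + b * Real.cos x ^ 2) ^ ((5:ℝ)/2)
        < Real.cos (2 * x) / (a + b * Real.sin x ^ 2) ^ ((5:ℝ)/2) :=
      div_lt_div_of_pos_left hcos2 hApow hrpow
    have : f x = Real.cos (2 * x) / (a + b * Real.sin x ^ 2) ^ ((5:ℝ)/2) := rfl
    rw [this, hfval]
    rw [neg_div]
    linarith
  · have hpi := Real.pi_pos; linarith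

/-- Positivity of `∂ₓΦ(Q) = 4r Σₖ κₖ r̂ₖ ∫₀^{π/2} cos 2σ / ((r − r̂ₖ)² + 4 r r̂ₖ sin²σ)^{5/2} dσ`
for `r, r̂₁, r̂₂ > 0` with `r ≠ r̂₁`, `r ≠ r̂₂` and `κ₁, κ₂ > 0`. -/
theorem stmt1 (r rh₁ rh₂ κ₁ κ₂ : ℝ) (hr : 0 < r) (h₁ : 0 < rh₁) (h₂ : 0 < rh₂)
    (hne₁ : r ≠ rh₁) (hne₂ : r ≠ rh₂) (hκ₁ : 0 < κ₁) (hκ₂ : 0 < κ₂) :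
    0 < 4 * r *
      (κ₁ * rh₁ * (∫ σ in (0:ℝ)..(π/2),
          Real.cos (2 * σ) / ((r - rh₁) ^ 2 + 4 * r * rh₁ * Real.sin σ ^ 2) ^ ((5:ℝ)/2))
       + κ₂ * rh₂ * (∫ σ in (0:ℝ)..(π/2),
          Real.cos (2 * σ) / ((r - rh₂) ^ 2 + 4 * r * rh₂ * Real.sin σ ^ 2) ^ ((5:ℝ)/2))) := by
  have hI₁ := key_pos ((r - rh₁) ^ 2) (4 * r * rh₁)
    (by have := sub_ne_zero.mpr hne₁; positivity) (by positivity)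
  have hI₂ := key_pos ((r - rh₂) ^ 2) (4 * r * rh₂)
    (by have := sub_ne_zero.mpr hne₂; positivity) (by positivity)
  exact mul_pos (by positivity)
    (add_pos (mul_pos (mul_pos hκ₁ h₁) hI₁) (mul_pos (mul_pos hκ₂ h₂) hI₂))
end

section
/- Let κ₁, κ₂ > 0 and let s₁, s₂, x₁, x₂ : ℝ → ℝ be differentiable functions with s₁(t), s₂(t) > 0 and (s₁(t), x₁(t)) ≠ (s₂(t), x₂(t)) for all t. Set rₖ(t) := √(sₖ(t)). If for each k ∈ {1,2} and j ≠ k the equation ṡₖ(t) = 4 κⱼ r₁(t) r₂(t) (xₖ(t) − xⱼ(t)) ∫₀^{π/2} cos(2σ) / Δ₁₂(σ, t)^{3/2} dσ holds for all t, then the function G(t) := κ₁ s₁(t) + κ₂ s₂(t) is constant. -/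
open Real intervalIntegral

theorem linear_combination_const_of_deriv_eq_zero {f g : ℝ → ℝ} (a b : ℝ)
    (hf : Differentiable ℝ f) (hg : Differentiable ℝ g)
    (h : ∀ t, a * deriv f t + b * deriv g t = 0) (t t' : ℝ) :
    a * f t + b * g t = a * f t' + b * g t' := by
  have hdiff : Differentiable ℝ (fun t => a * f t + b * g t) :=
    (hf.const_mul a).add (hg.const_mul b)
  refine is_const_of_deriv_eq_zero hdiff (fun u => ?_) t t'
  rw [deriv_fun_add ((hf u).const_mul a) ((hg u).const_mul b),
    deriv_const_mul a (hf u), deriv_const_mul b (hg u), h u]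

theorem stmt2_general (κ₁ κ₂ : ℝ)
    (s₁ s₂ x₁ x₂ : ℝ → ℝ)
    (hs₁ : Differentiable ℝ s₁) (hs₂ : Differentiable ℝ s₂)
    (hode₁ : ∀ t, deriv s₁ t =
      4 * κ₂ * Real.sqrt (s₁ t) * Real.sqrt (s₂ t) * (x₁ t - x₂ t) *
        ∫ σ in (0:ℝ)..(π/2), Real.cos (2 * σ) /
          ((Real.sqrt (s₁ t) - Real.sqrt (s₂ t)) ^ 2 + (x₁ t - x₂ t) ^ 2 +
            4 * Real.sqrt (s₁ t) * Real.sqrt (s₂ t) * Real.sin σ ^ 2) ^ ((3:ℝ)/2))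
    (hode₂ : ∀ t, deriv s₂ t =
      4 * κ₁ * Real.sqrt (s₁ t) * Real.sqrt (s₂ t) * (x₂ t - x₁ t) *
        ∫ σ in (0:ℝ)..(π/2), Real.cos (2 * σ) /
          ((Real.sqrt (s₁ t) - Real.sqrt (s₂ t)) ^ 2 + (x₁ t - x₂ t) ^ 2 +
            4 * Real.sqrt (s₁ t) * Real.sqrt (s₂ t) * Real.sin σ ^ 2) ^ ((3:ℝ)/2)) :
    ∀ t t' : ℝ, κ₁ * s₁ t + κ₂ * s₂ t = κ₁ * s₁ t' + κ₂ * s₂ t' := by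
  -- The interaction terms are antisymmetric in the two rings, so `κ₁ ṡ₁ + κ₂ ṡ₂ = 0`.
  refine linear_combination_const_of_deriv_eq_zero κ₁ κ₂ hs₁ hs₂ fun t => ?_
  rw [hode₁ t, hode₂ t]
  ring

/-- If differentiable functions `s₁, s₂, x₁, x₂` (with `s₁, s₂ > 0` and the two rings never
coinciding) satisfy the radial equations of motion of two coaxial vortex rings of strengths
`κ₁, κ₂ > 0`, then `G(t) := κ₁ s₁(t) + κ₂ s₂(t)` is constant. Here `rₖ(t) = √(sₖ(t))` and
`Δ₁₂(σ,t) = (r₁(t) − r₂(t))² + (x₁(t) − x₂(t))² + 4 r₁(t) r₂(t) sin²σ`. -/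
theorem stmt2 (κ₁ κ₂ : ℝ) (hκ₁ : 0 < κ₁) (hκ₂ : 0 < κ₂)
    (s₁ s₂ x₁ x₂ : ℝ → ℝ)
    (hs₁ : Differentiable ℝ s₁) (hs₂ : Differentiable ℝ s₂)
    (hx₁ : Differentiable ℝ x₁) (hx₂ : Differentiable ℝ x₂)
    (hpos₁ : ∀ t, 0 < s₁ t) (hpos₂ : ∀ t, 0 < s₂ t)
    (hne : ∀ t, (s₁ t, x₁ t) ≠ (s₂ t, x₂ t))
    (hode₁ : ∀ t, deriv s₁ t =
      4 * κ₂ * Real.sqrt (s₁ t) * Real.sqrt (s₂ t) * (x₁ t - x₂ t) *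
        ∫ σ in (0:ℝ)..(π/2), Real.cos (2 * σ) /
          ((Real.sqrt (s₁ t) - Real.sqrt (s₂ t)) ^ 2 + (x₁ t - x₂ t) ^ 2 +
            4 * Real.sqrt (s₁ t) * Real.sqrt (s₂ t) * Real.sin σ ^ 2) ^ ((3:ℝ)/2))
    (hode₂ : ∀ t, deriv s₂ t =
      4 * κ₁ * Real.sqrt (s₁ t) * Real.sqrt (s₂ t) * (x₂ t - x₁ t) *
        ∫ σ in (0:ℝ)..(π/2), Real.cos (2 * σ) /
          ((Real.sqrt (s₁ t) - Real.sqrt (s₂ t)) ^ 2 + (x₁ t - x₂ t) ^ 2 +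
            4 * Real.sqrt (s₁ t) * Real.sqrt (s₂ t) * Real.sin σ ^ 2) ^ ((3:ℝ)/2)) :
    ∀ t t' : ℝ, κ₁ * s₁ t + κ₂ * s₂ t = κ₁ * s₁ t' + κ₂ * s₂ t' :=
  stmt2_general κ₁ κ₂ s₁ s₂ x₁ x₂ hs₁ hs₂ hode₁ hode₂
end

section
/- Fix χ > 0, γ ∈ ℝ, and 0 < α < (χ/2) e^{−(1+γ)}, and let r̃₁ₐ ∈ (r₀, ρ) be the unique solution of ψ(r) = α in (r₀, ρ). Define f(r) := χ⁻¹ exp(2α r + γ). Then for every initial value r⁽⁰⁾ ∈ (0, ρ), the iterates defined by r⁽ⁿ⁺¹⁾ := f(r⁽ⁿ⁾) converge to r̃₁ₐ as n → ∞. -/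
open Real Set Filter Topology Function
open scoped NNReal

/-!
The map `f(r) = χ⁻¹ exp(2αr + γ)` sends `[0, ρ]` into itself as soon as `2αρ ≤ 1`, and since
`f' = 2α f ≤ 2αρ` there, the mean value theorem makes it a contraction of `[0, ρ]` exactly when
`α < (χ/2) e^{-(1+γ)}`. A solution of `ψ(r) = α` is a fixed point of `f`, so the iterates converge
to it geometrically.
-/

theorem LipschitzOnWith.tendsto_iterate_of_isFixedPt {X : Type*} [PseudoMetricSpace X]
    {f : X → X} {s : Set X} {K : ℝ≥0} (hK : K < 1) (hf : LipschitzOnWith K f s)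
    (hs : MapsTo f s s) {p : X} (hp : p ∈ s) (hfix : IsFixedPt f p) {x : X} (hx : x ∈ s) :
    Tendsto (fun n => f^[n] x) atTop (𝓝 p) := by
  have hdist : ∀ n : ℕ, dist (f^[n] x) p ≤ K ^ n * dist x p := by
    intro n
    induction n with
    | zero => simp
    | succ n ih =>
      calc dist (f^[n + 1] x) p = dist (f (f^[n] x)) (f p) := by
            rw [Function.iterate_succ_apply', hfix]
        _ ≤ K * dist (f^[n] x) p := hf.dist_le_mul _ (hs.iterate n hx) _ hp
        _ ≤ K * (K ^ n * dist x p) := by gcongr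
        _ = K ^ (n + 1) * dist x p := by ring
  rw [tendsto_iff_dist_tendsto_zero]
  refine squeeze_zero (fun _ => dist_nonneg) hdist ?_
  simpa using (tendsto_pow_atTop_nhds_zero_of_lt_one K.coe_nonneg hK).mul_const (dist x p)

noncomputable def picardMap (χ γ α r : ℝ) : ℝ := χ⁻¹ * exp (2 * α * r + γ)

section

variable {χ γ α : ℝ}

theorem hasDerivAt_picardMap (r : ℝ) :
    HasDerivAt (picardMap χ γ α) (2 * α * picardMap χ γ α r) r := by
  refine ((((hasDerivAt_id r).const_mul (2 * α)).add_const γ).exp.const_mul χ⁻¹).congr_deriv ?_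
  rw [picardMap, id]
  ring

theorem picardMap_le (hχ : 0 < χ) {r : ℝ} (hr : 2 * α * r ≤ 1) :
    picardMap χ γ α r ≤ exp (γ + 1) / χ := by
  rw [picardMap, inv_mul_eq_div]
  exact div_le_div_of_nonneg_right (exp_le_exp.2 (by linarith)) hχ.le

theorem mapsTo_picardMap (hχ : 0 < χ) (hα : 0 ≤ α) (hαρ : 2 * α * (exp (γ + 1) / χ) ≤ 1) :
    MapsTo (picardMap χ γ α) (Icc 0 (exp (γ + 1) / χ)) (Icc 0 (exp (γ + 1) / χ)) := by
  intro r hr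
  refine ⟨by unfold picardMap; positivity, picardMap_le hχ ?_⟩
  calc 2 * α * r ≤ 2 * α * (exp (γ + 1) / χ) := by gcongr; exact hr.2
    _ ≤ 1 := hαρ

theorem lipschitzOnWith_picardMap (hχ : 0 < χ) (hα : 0 ≤ α)
    (hαρ : 2 * α * (exp (γ + 1) / χ) ≤ 1) :
    LipschitzOnWith (2 * α * (exp (γ + 1) / χ)).toNNReal (picardMap χ γ α)
      (Icc 0 (exp (γ + 1) / χ)) := by
  refine (convex_Icc _ _).lipschitzOnWith_of_nnnorm_hasDerivWithin_le
    (fun r _ => (hasDerivAt_picardMap r).hasDerivWithinAt) fun r hr => ?_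
  have hfr := mapsTo_picardMap hχ hα hαρ hr
  rw [← NNReal.coe_le_coe, coe_nnnorm, Real.coe_toNNReal _ (by positivity),
    Real.norm_of_nonneg (mul_nonneg (by positivity) hfr.1)]
  gcongr
  exact hfr.2

theorem two_mul_mul_exp_div_lt_one_iff (hχ : 0 < χ) :
    2 * α * (exp (γ + 1) / χ) < 1 ↔ α < χ / 2 * exp (-(1 + γ)) := by
  rw [show -(1 + γ) = -(γ + 1) by ring, exp_neg, ← div_eq_mul_inv,
    mul_div_assoc', div_lt_one (by positivity), lt_div_iff₀ (by positivity)]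
  constructor <;> intro h <;> linarith

theorem isFixedPt_picardMap (hχ : 0 < χ) {r : ℝ} (hr : 0 < r)
    (hψ : (2 * r)⁻¹ * (log (χ * r) - γ) = α) : IsFixedPt (picardMap χ γ α) r := by
  have hlog : 2 * α * r + γ = log (χ * r) := by
    rw [← hψ]
    field_simp
    ring
  rw [IsFixedPt, picardMap, hlog, exp_log (by positivity)]
  field_simp

end

/-- Picard iteration (41): for `0 < α < (χ/2)e^{−(1+γ)}` and `r̃₁ₐ ∈ (r₀, ρ)` the unique
solution there of `ψ(r) = α`, the iterates of `f(r) := χ⁻¹ exp(2αr + γ)` starting at any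
point of `(0, ρ)` converge to `r̃₁ₐ`. -/
theorem stmt8 (χ γ α : ℝ) (hχ : 0 < χ) (hα : 0 < α)
    (hα' : α < (χ / 2) * Real.exp (-(1 + γ)))
    (r1a : ℝ) (hr1a : r1a ∈ Set.Ioo (Real.exp γ / χ) (Real.exp (γ + 1) / χ))
    (hψ : (2 * r1a)⁻¹ * (Real.log (χ * r1a) - γ) = α) :
    ∀ r0 ∈ Set.Ioo (0:ℝ) (Real.exp (γ + 1) / χ),
      Tendsto (fun n => (fun r => χ⁻¹ * Real.exp (2 * α * r + γ))^[n] r0)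
        atTop (𝓝 r1a) := by
  intro r0 hr0
  have hr1a_pos : 0 < r1a := (div_pos (exp_pos γ) hχ).trans hr1a.1
  have hk : 2 * α * (exp (γ + 1) / χ) < 1 := (two_mul_mul_exp_div_lt_one_iff hχ).2 hα'
  exact (lipschitzOnWith_picardMap hχ hα.le hk.le).tendsto_iterate_of_isFixedPt
    (Real.toNNReal_lt_one.2 hk) (mapsTo_picardMap hχ hα.le hk.le) ⟨hr1a_pos.le, hr1a.2.le⟩
    (isFixedPt_picardMap hχ hr1a_pos hψ) (Ioo_subset_Icc_self hr0)
end

section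
/- Fix χ > 0, γ ∈ ℝ, and 0 < α < (χ/2) e^{−(1+γ)}, and let r̃₁_b ∈ (ρ, ∞) be the unique solution of ψ(r) = α in (ρ, ∞). Define g(r) := (2α)⁻¹(log(χ r) − γ) for r > 0. Then for every initial value r⁽⁰⁾ ≥ ρ, the iterates defined by r⁽ⁿ⁺¹⁾ := g(r⁽ⁿ⁾) converge to r̃₁_b as n → ∞. -/
/-!
The map `g` is increasing and `g r - r` is concave on `(0, ∞)`. This difference is positive at `ρ`
(which is what the bound on `α` says) and vanishes at `r̃₁_b`, so concavity forces `r < g r` on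
`[ρ, r̃₁_b)` and `g r < r` beyond `r̃₁_b`. Hence the iterates form a monotone sequence, bounded by
`r̃₁_b`, whose limit is a fixed point of `g` in `[ρ, ∞)`; the only one is `r̃₁_b`.
-/

open Real Set Filter Topology Function

section

variable {α : Type*} [TopologicalSpace α] [T2Space α] {f : α → α} {s : Set α} {x y : α}

theorem isFixedPt_of_tendsto_iterate_of_mapsTo (hs : IsClosed s) (hfs : MapsTo f s s)
    (hf : ContinuousOn f s) (hx : x ∈ s) (hy : Tendsto (fun n => f^[n] x) atTop (𝓝 y)) :
    IsFixedPt f y := by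
  have hmem : ∀ n, f^[n] x ∈ s := fun n => hfs.iterate n hx
  have hys : y ∈ s := hs.mem_of_tendsto hy (.of_forall hmem)
  have hy' : Tendsto (fun n => f^[n] x) atTop (𝓝[s] y) :=
    tendsto_nhdsWithin_iff.2 ⟨hy, .of_forall hmem⟩
  refine tendsto_nhds_unique ((tendsto_add_atTop_iff_nat 1).1 ?_) hy
  simp only [iterate_succ']
  exact (hf y hys).tendsto.comp hy'

end

section

variable {α : Type*} [ConditionallyCompleteLinearOrder α] [TopologicalSpace α] [OrderTopology α]
  {f : α → α} {s : Set α} {x p : α}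

theorem tendsto_iterate_of_le_map (hs : IsClosed s) (hfs : MapsTo f s s)
    (hf : ContinuousOn f s) (hx : x ∈ s) (hbdd : BddAbove s) (hle : ∀ y ∈ s, y ≤ f y)
    (hfix : ∀ y ∈ s, f y = y → y = p) : Tendsto (fun n => f^[n] x) atTop (𝓝 p) := by
  have hmem : ∀ n, f^[n] x ∈ s := fun n => hfs.iterate n hx
  have hmono : Monotone fun n => f^[n] x := monotone_nat_of_le_succ fun n => by
    rw [iterate_succ_apply']
    exact hle _ (hmem n)
  have hlim := tendsto_atTop_ciSup hmono (hbdd.mono (range_subset_iff.2 hmem))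
  have hL := isFixedPt_of_tendsto_iterate_of_mapsTo hs hfs hf hx hlim
  rwa [hfix _ (hs.mem_of_tendsto hlim (.of_forall hmem)) hL] at hlim

theorem tendsto_iterate_of_map_le (hs : IsClosed s) (hfs : MapsTo f s s)
    (hf : ContinuousOn f s) (hx : x ∈ s) (hbdd : BddBelow s) (hle : ∀ y ∈ s, f y ≤ y)
    (hfix : ∀ y ∈ s, f y = y → y = p) : Tendsto (fun n => f^[n] x) atTop (𝓝 p) :=
  tendsto_iterate_of_le_map (α := αᵒᵈ) hs hfs hf hx hbdd hle hfix

theorem MonotoneOn.tendsto_iterate {a : α} (hmono : MonotoneOn f (Ici a))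
    (hf : ContinuousOn f (Ici a)) (hap : a ≤ p) (hfp : f p = p)
    (hbelow : ∀ y ∈ Ico a p, y < f y) (habove : ∀ y, p < y → f y < y) (hx : a ≤ x) :
    Tendsto (fun n => f^[n] x) atTop (𝓝 p) := by
  have hle : ∀ y ∈ Icc a p, y ≤ f y := fun y ⟨hay, hyp⟩ =>
    hyp.lt_or_eq.elim (fun h => (hbelow y ⟨hay, h⟩).le) (fun h => h ▸ hfp.ge)
  have hge : ∀ y ∈ Ici p, f y ≤ y := fun y hy =>
    hy.lt_or_eq.elim (fun h => (habove y h).le) (fun h => h ▸ hfp.le)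
  rcases le_total x p with hxp | hpx
  · refine tendsto_iterate_of_le_map isClosed_Icc (fun y hy => ⟨hy.1.trans (hle y hy), ?_⟩)
      (hf.mono Icc_subset_Ici_self) ⟨hx, hxp⟩ bddAbove_Icc hle fun y hy hfy => ?_
    · exact hfp ▸ hmono hy.1 hap hy.2
    · by_contra hyp
      exact (hbelow y ⟨hy.1, hy.2.lt_of_ne hyp⟩).ne' hfy
  · refine tendsto_iterate_of_map_le isClosed_Ici (fun y hy => ?_)
      (hf.mono (Ici_subset_Ici.2 hap)) hpx bddBelow_Ici hge fun y hy hfy => ?_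
    · exact hfp ▸ hmono hap (hap.trans hy) hy
    · by_contra hyp
      exact (habove y (lt_of_le_of_ne hy (Ne.symm hyp))).ne hfy

end

section

variable {𝕜 β : Type*} [Field 𝕜] [LinearOrder 𝕜] [IsStrictOrderedRing 𝕜]
  [AddCommMonoid β] [LinearOrder β] [IsOrderedCancelAddMonoid β] [Module 𝕜 β]
  [PosSMulStrictMono 𝕜 β] {s : Set 𝕜} {f : 𝕜 → β} {a p y : 𝕜}

theorem ConcaveOn.right_lt_of_mem_Ico (hf : ConcaveOn 𝕜 s f) (ha : a ∈ s) (hp : p ∈ s)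
    (hlt : f p < f a) (hy : y ∈ Ico a p) : f p < f y := by
  obtain rfl | hay := hy.1.eq_or_lt
  · exact hlt
  refine lt_of_not_ge fun hyp =>
    hlt.not_ge ((hf.left_le_of_le_right (z := y) ha hp ?_ hyp).trans hyp)
  rw [openSegment_eq_Ioo (hay.trans hy.2)]
  exact ⟨hay, hy.2⟩

theorem ConcaveOn.lt_right_of_right_lt (hf : ConcaveOn 𝕜 s f) (ha : a ∈ s) (hy : y ∈ s)
    (hap : a < p) (hlt : f p < f a) (hpy : p < y) : f y < f p := by
  refine hf.lt_right_of_left_lt ha hy ?_ hlt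
  rw [openSegment_eq_Ioo (hap.trans hpy)]
  exact ⟨hap, hpy⟩

end

/-- The map `g` of the iteration (42). -/
noncomputable def logIterMap (χ γ α r : ℝ) : ℝ := (2 * α)⁻¹ * (Real.log (χ * r) - γ)

section

variable {χ γ α : ℝ}

theorem monotoneOn_logIterMap (hχ : 0 < χ) (hα : 0 ≤ α) :
    MonotoneOn (logIterMap χ γ α) (Ioi 0) := fun x hx y _ hxy => by
  unfold logIterMap
  have : 0 < χ * x := mul_pos hχ hx
  gcongr

theorem continuousOn_logIterMap (hχ : 0 < χ) : ContinuousOn (logIterMap χ γ α) (Ioi 0) :=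
  fun x hx => by
    unfold logIterMap
    have : χ * x ≠ 0 := (mul_pos hχ hx).ne'
    fun_prop (disch := assumption)

theorem concaveOn_logIterMap_sub_id (hχ : 0 < χ) (hα : 0 ≤ α) :
    ConcaveOn ℝ (Ioi 0) fun r => logIterMap χ γ α r - r := by
  have h := ((strictConcaveOn_log_Ioi.concaveOn.add_const (Real.log χ - γ)).smul
    (inv_nonneg.2 (mul_nonneg zero_le_two hα))).sub (convexOn_id (convex_Ioi 0))
  refine h.congr fun r (hr : 0 < r) => ?_
  simp only [Pi.sub_apply, Pi.add_apply, smul_eq_mul, id, logIterMap,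
    Real.log_mul hχ.ne' hr.ne']
  ring

theorem logIterMap_exp_div (hχ : 0 < χ) :
    logIterMap χ γ α (Real.exp (γ + 1) / χ) = (2 * α)⁻¹ := by
  rw [logIterMap, mul_div_cancel₀ _ hχ.ne', Real.log_exp, add_sub_cancel_left, mul_one]

end

/-- Inverse fixed-point iteration (42): for `0 < α < (χ/2)e^{−(1+γ)}` and `r̃₁_b ∈ (ρ, ∞)`
the unique solution there of `ψ(r) = α`, the iterates of `g(r) := (2α)⁻¹(log(χ r) − γ)`
starting at any `r⁽⁰⁾ ≥ ρ` converge to `r̃₁_b`. -/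
theorem stmt9 (χ γ α : ℝ) (hχ : 0 < χ) (hα : 0 < α)
    (hα' : α < (χ / 2) * Real.exp (-(1 + γ)))
    (r1b : ℝ) (hr1b : r1b ∈ Set.Ioi (Real.exp (γ + 1) / χ))
    (hψ : (2 * r1b)⁻¹ * (Real.log (χ * r1b) - γ) = α) :
    ∀ r0 : ℝ, Real.exp (γ + 1) / χ ≤ r0 →
      Tendsto (fun n => (fun r => (2 * α)⁻¹ * (Real.log (χ * r) - γ))^[n] r0)
        atTop (𝓝 r1b) := by
  intro r0 hr0
  set ρ := Real.exp (γ + 1) / χ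
  have hρ : 0 < ρ := by positivity
  have hr1b_pos : 0 < r1b := hρ.trans hr1b
  have hfix : logIterMap χ γ α r1b = r1b := by
    have hψ' : Real.log (χ * r1b) - γ = 2 * α * r1b := by
      rw [← hψ]
      field_simp
    rw [logIterMap, hψ']
    field_simp
  have hsign : logIterMap χ γ α r1b - r1b < logIterMap χ γ α ρ - ρ := by
    rw [hfix, sub_self, sub_pos, logIterMap_exp_div hχ, lt_inv_comm₀ hρ (by positivity),
      inv_div, div_eq_mul_inv, ← Real.exp_neg, add_comm]
    linarith
  have hconc := concaveOn_logIterMap_sub_id (γ := γ) hχ hα.le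
  refine ((monotoneOn_logIterMap hχ hα.le).mono (Ici_subset_Ioi.2 hρ)).tendsto_iterate
    ((continuousOn_logIterMap hχ).mono (Ici_subset_Ioi.2 hρ)) (le_of_lt hr1b) hfix
    (fun y hy => ?_) (fun y hy => ?_) hr0
  · simpa [hfix] using hconc.right_lt_of_mem_Ico hρ hr1b_pos hsign hy
  · simpa [hfix] using hconc.lt_right_of_right_lt hρ (hr1b_pos.trans hy) hr1b hsign hy
end

section
/- Let 0 < r̂₁ < r̂₂ and κ > 0, and define Ξ on (r̂₁, r̂₂) as in the context. Then Ξ(r) → −∞ as r → r̂₁ from the right, and Ξ(r) → +∞ as r → r̂₂ from the left. -/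
/-!
Write `Ξ(r) = K(r̂₁, r) + κ K(r̂₂, r)` with `K(a, r) = ∫₀^{π/2} ringKernel a r σ dσ`. Near `r = b ≠ a`
the kernel `ringKernel a r` is uniformly bounded, so `K(a, ·)` stays bounded there. Near `r = a`,
with `D = (r - a)² + 4ra sin²σ` the numerator is `a(a - r) + 2ar sin²σ`. Since `D ≲ (r - a)²` for
`σ ≤ |r - a|`, the first part contributes `a(a - r) ∫ D^{-3/2}` with `∫ D^{-3/2} ≳ (r - a)⁻²`; the
second part is nonnegative and, as `4ra sin²σ ≤ D`, at most `½ ∫ D^{-1/2} = O(|r - a|^{-1/2})`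
(split the integral at `σ = √|r - a|`). Hence `K(a, r) → -∞` as `r → a⁺` and `K(a, r) → +∞` as
`r → a⁻`.
-/

open Real intervalIntegral Set Filter Topology

noncomputable section

/-- `(r - a)² + 4 r a sin² σ = r² + a² - 2 r a cos 2σ`: the squared distance between points at
radii `r` and `a` separated by the angle `2σ`. -/
def ringDistSq (a r σ : ℝ) : ℝ := (r - a) ^ 2 + 4 * r * a * sin σ ^ 2

def ringKernel (a r σ : ℝ) : ℝ :=
  a * (a - r * cos (2 * σ)) / ringDistSq a r σ ^ ((3 : ℝ) / 2)

end

lemma rpow_three_halves_eq_mul_sqrt {x : ℝ} (hx : 0 ≤ x) : x ^ ((3 : ℝ) / 2) = x * √x := by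
  rw [sqrt_eq_rpow, ← rpow_one_add' hx (by norm_num)]
  norm_num

section RingKernel

variable {a r R : ℝ}

lemma sq_sub_le_ringDistSq (ha : 0 ≤ a) (hr : 0 ≤ r) (σ : ℝ) : (r - a) ^ 2 ≤ ringDistSq a r σ :=
  le_add_of_nonneg_right (by positivity)

lemma sin_sq_le_ringDistSq (σ : ℝ) : 4 * r * a * sin σ ^ 2 ≤ ringDistSq a r σ :=
  le_add_of_nonneg_left (sq_nonneg _)

lemma ringDistSq_pos (ha : 0 ≤ a) (hr : 0 ≤ r) (hne : r ≠ a) (σ : ℝ) : 0 < ringDistSq a r σ :=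
  (sq_pos_of_ne_zero (sub_ne_zero.2 hne)).trans_le (sq_sub_le_ringDistSq ha hr σ)

lemma ringDistSq_le (ha : 0 ≤ a) (hr : 0 ≤ r) (hrR : r ≤ R) {σ : ℝ} (hσ : |σ| ≤ |r - a|) :
    ringDistSq a r σ ≤ (1 + 4 * R * a) * (r - a) ^ 2 := by
  have hsin : sin σ ^ 2 ≤ (r - a) ^ 2 :=
    sin_sq_le_sq.trans (sq_le_sq.2 (by simpa [abs_abs] using hσ))
  have : 4 * r * a * sin σ ^ 2 ≤ 4 * R * a * (r - a) ^ 2 := by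
    have : 0 ≤ R := hr.trans hrR
    gcongr
  unfold ringDistSq
  linarith

lemma continuous_ringDistSq (a r : ℝ) : Continuous (ringDistSq a r) := by
  unfold ringDistSq; fun_prop

lemma continuous_inv_sqrt_ringDistSq (ha : 0 ≤ a) (hr : 0 ≤ r) (hne : r ≠ a) :
    Continuous fun σ => (√(ringDistSq a r σ))⁻¹ :=
  (continuous_ringDistSq a r).sqrt.inv₀ fun σ => (sqrt_pos.2 (ringDistSq_pos ha hr hne σ)).ne'

lemma continuous_inv_ringDistSq_mul_sqrt (ha : 0 ≤ a) (hr : 0 ≤ r) (hne : r ≠ a) :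
    Continuous fun σ => (ringDistSq a r σ * √(ringDistSq a r σ))⁻¹ :=
  ((continuous_ringDistSq a r).mul (continuous_ringDistSq a r).sqrt).inv₀ fun σ =>
    have := ringDistSq_pos ha hr hne σ
    (mul_pos this (sqrt_pos.2 this)).ne'

lemma ringKernel_eq_add_div {σ : ℝ} (hD : 0 ≤ ringDistSq a r σ) :
    ringKernel a r σ = a * (a - r) / (ringDistSq a r σ * √(ringDistSq a r σ))
      + 2 * a * r * sin σ ^ 2 / (ringDistSq a r σ * √(ringDistSq a r σ)) := by
  rw [ringKernel, rpow_three_halves_eq_mul_sqrt hD, ← add_div, cos_two_mul']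
  congr 1
  linear_combination (-(a * r)) * sin_sq_add_cos_sq σ

lemma continuous_ringKernel (ha : 0 ≤ a) (hr : 0 ≤ r) (hne : r ≠ a) :
    Continuous (ringKernel a r) :=
  (by fun_prop : Continuous fun σ => a * (a - r * cos (2 * σ))).div
    ((continuous_ringDistSq a r).rpow_const fun _ => Or.inr (by norm_num))
    fun σ => (rpow_pos_of_pos (ringDistSq_pos ha hr hne σ) _).ne'

lemma sin_sq_div_ringDistSq_le {σ : ℝ} (hD : 0 < ringDistSq a r σ) :
    2 * a * r * sin σ ^ 2 / (ringDistSq a r σ * √(ringDistSq a r σ))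
      ≤ 2⁻¹ * (√(ringDistSq a r σ))⁻¹ := by
  have hs : 0 < √(ringDistSq a r σ) := sqrt_pos.2 hD
  rw [div_le_iff₀ (by positivity)]
  have := sin_sq_le_ringDistSq (a := a) (r := r) σ
  field_simp
  linarith

lemma abs_ringKernel_le (ha : 0 ≤ a) (hr : 0 ≤ r) (hrR : r ≤ R) {d : ℝ} (hd : 0 < d)
    (hdist : d ≤ |r - a|) (σ : ℝ) : |ringKernel a r σ| ≤ a * (a + R) / d ^ 3 := by
  have hD : d ^ 2 ≤ ringDistSq a r σ := by
    refine le_trans ?_ (sq_sub_le_ringDistSq ha hr σ)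
    rw [← sq_abs (r - a)]
    gcongr
  have hD0 : 0 ≤ ringDistSq a r σ := (sq_nonneg d).trans hD
  have hden : d ^ 3 ≤ ringDistSq a r σ ^ ((3 : ℝ) / 2) := by
    rw [rpow_three_halves_eq_mul_sqrt hD0, pow_succ]
    exact mul_le_mul hD (le_sqrt_of_sq_le hD) hd.le hD0
  have hnum : |a * (a - r * cos (2 * σ))| ≤ a * (a + R) := by
    rw [abs_mul, abs_of_nonneg ha]
    gcongr
    calc |a - r * cos (2 * σ)| ≤ |a| + |r * cos (2 * σ)| := abs_sub _ _
      _ ≤ a + R := by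
        rw [abs_of_nonneg ha, abs_mul, abs_of_nonneg hr]
        nlinarith [abs_cos_le_one (2 * σ), abs_nonneg (cos (2 * σ))]
  rw [ringKernel, abs_div, abs_of_nonneg (rpow_nonneg hD0 _)]
  have hR : 0 ≤ R := hr.trans hrR
  exact div_le_div₀ (by positivity) hnum (by positivity) hden

end RingKernel

section Integrals

variable {a r R : ℝ}

lemma le_integral_inv_ringDistSq_mul_sqrt (ha : 0 ≤ a) (hr : 0 ≤ r) (hrR : r ≤ R) (hne : r ≠ a)
    (hπ : |r - a| ≤ π / 2) :
    1 / ((1 + 4 * R * a) * √(1 + 4 * R * a) * |r - a| ^ 2)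
      ≤ ∫ σ in (0)..π / 2, (ringDistSq a r σ * √(ringDistSq a r σ))⁻¹ := by
  set ε := |r - a|
  set L := 1 + 4 * R * a
  have hε : 0 < ε := abs_pos.2 (sub_ne_zero.2 hne)
  have hL : 0 < L := by have := hr.trans hrR; positivity
  have hD σ : 0 < ringDistSq a r σ * √(ringDistSq a r σ) :=
    have := ringDistSq_pos ha hr hne σ
    mul_pos this (sqrt_pos.2 this)
  have hcont := continuous_inv_ringDistSq_mul_sqrt ha hr hne
  calc 1 / (L * √L * ε ^ 2) = ∫ σ in (0)..ε, (L * √L * ε ^ 3)⁻¹ := by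
        rw [integral_const, smul_eq_mul, sub_zero]; field_simp
    _ ≤ ∫ σ in (0)..ε, (ringDistSq a r σ * √(ringDistSq a r σ))⁻¹ := by
        refine integral_mono_on hε.le intervalIntegrable_const (hcont.intervalIntegrable _ _) ?_
        rintro σ ⟨hσ₀, hσε⟩
        have hDle := ringDistSq_le ha hr hrR (σ := σ) (by rwa [abs_of_nonneg hσ₀])
        have hsqrt : √(ringDistSq a r σ) ≤ √L * ε := by
          rw [← sqrt_sq hε.le, ← sqrt_mul hL.le, sq_abs]
          exact sqrt_le_sqrt hDle
        refine inv_anti₀ (hD σ) ?_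
        calc _ ≤ L * (r - a) ^ 2 * (√L * ε) :=
              mul_le_mul hDle hsqrt (sqrt_nonneg _) (by positivity)
          _ = _ := by rw [← sq_abs (r - a)]; ring
    _ ≤ _ := integral_mono_interval le_rfl hε.le hπ
        (Eventually.of_forall fun σ => (inv_pos.2 (hD σ)).le) (hcont.intervalIntegrable _ _)

lemma integral_inv_sqrt_ringDistSq_le (ha : 0 < a) (har : a < r) (hε : r - a < 1) :
    ∫ σ in (0)..π / 2, (√(ringDistSq a r σ))⁻¹ ≤ (1 + π ^ 2 / (8 * a)) / √(r - a) := by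
  set s := √(r - a)
  have hr : 0 < r := ha.trans har
  have hε₀ : 0 < r - a := sub_pos.2 har
  have hs : 0 < s := sqrt_pos.2 hε₀
  have hs2 : s ^ 2 = r - a := sq_sqrt hε₀.le
  have hsπ : s ≤ π / 2 := by nlinarith [pi_gt_three]
  have hcont := continuous_inv_sqrt_ringDistSq ha.le hr.le har.ne'
  have hnear : ∫ σ in (0)..s, (√(ringDistSq a r σ))⁻¹ ≤ 1 / s := by
    calc _ ≤ ‖∫ σ in (0)..s, (√(ringDistSq a r σ))⁻¹‖ := le_abs_self _
      _ ≤ (r - a)⁻¹ * |s - 0| := norm_integral_le_of_norm_le_const fun σ _ => by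
          rw [norm_inv, norm_of_nonneg (sqrt_nonneg _)]
          refine inv_anti₀ hε₀ (le_sqrt_of_sq_le ?_)
          exact sq_sub_le_ringDistSq ha.le hr.le σ
      _ = 1 / s := by rw [sub_zero, abs_of_pos hs, ← hs2]; field_simp
  have hfar : ∫ σ in s..π / 2, (√(ringDistSq a r σ))⁻¹ ≤ π ^ 2 / (8 * a) / s := by
    calc _ ≤ ‖∫ σ in s..π / 2, (√(ringDistSq a r σ))⁻¹‖ := le_abs_self _
      _ ≤ π / (4 * a * s) * |π / 2 - s| := norm_integral_le_of_norm_le_const fun σ hσ => by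
          rw [uIoc_of_le hsπ] at hσ
          have hsin : 2 * s / π ≤ sin σ := by
            have := mul_le_sin (hs.le.trans hσ.1.le) hσ.2
            calc 2 * s / π = 2 / π * s := by ring
              _ ≤ 2 / π * σ := by gcongr; exact hσ.1.le
              _ ≤ _ := this
          have hsq : (4 * a * s / π) ^ 2 ≤ ringDistSq a r σ := by
            refine le_trans ?_ (sin_sq_le_ringDistSq σ)
            calc (4 * a * s / π) ^ 2 = 4 * a * a * (2 * s / π) ^ 2 := by ring
              _ ≤ 4 * r * a * sin σ ^ 2 := by gcongr
          rw [norm_inv, norm_of_nonneg (sqrt_nonneg _), ← inv_div]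
          exact inv_anti₀ (by positivity) (le_sqrt_of_sq_le hsq)
      _ ≤ π / (4 * a * s) * (π / 2) := by
          rw [abs_of_nonneg (by linarith)]
          gcongr
          linarith
      _ = π ^ 2 / (8 * a) / s := by field_simp; ring
  rw [← integral_add_adjacent_intervals (hcont.intervalIntegrable 0 s)
    (hcont.intervalIntegrable s (π / 2))]
  calc _ ≤ 1 / s + π ^ 2 / (8 * a) / s := add_le_add hnear hfar
    _ = _ := by ring

end Integrals

section Asymptotics

variable {a r R : ℝ}

lemma integral_ringKernel_le (ha : 0 < a) (har : a < r) (hrR : r ≤ R) (hε : r - a < 1) :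
    ∫ σ in (0)..π / 2, ringKernel a r σ
      ≤ -(a / ((1 + 4 * R * a) * √(1 + 4 * R * a))) / (r - a)
        + (1 + π ^ 2 / (8 * a)) / 2 / √(r - a) := by
  have hr : 0 < r := ha.trans har
  have hε₀ : 0 < r - a := sub_pos.2 har
  have hK : 0 < (1 + 4 * R * a) * √(1 + 4 * R * a) := by
    have : 0 < R := hr.trans_le hrR
    positivity
  have hI := le_integral_inv_ringDistSq_mul_sqrt ha.le hr.le hrR har.ne'
    (by rw [abs_of_pos hε₀]; linarith [pi_gt_three])
  rw [abs_of_pos hε₀] at hI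
  have hJ := integral_inv_sqrt_ringDistSq_le ha har hε
  have hI₃ := (continuous_inv_ringDistSq_mul_sqrt ha.le hr.le har.ne').intervalIntegrable (μ := MeasureTheory.volume) 0 (π / 2)
  have hI₁ := (continuous_inv_sqrt_ringDistSq ha.le hr.le har.ne').intervalIntegrable (μ := MeasureTheory.volume) 0 (π / 2)
  calc ∫ σ in (0)..π / 2, ringKernel a r σ
      ≤ ∫ σ in (0)..π / 2, (-(a * (r - a)) * (ringDistSq a r σ * √(ringDistSq a r σ))⁻¹
          + 2⁻¹ * (√(ringDistSq a r σ))⁻¹) := by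
        refine integral_mono_on (by positivity)
          ((continuous_ringKernel ha.le hr.le har.ne').intervalIntegrable _ _)
          ((hI₃.const_mul _).add (hI₁.const_mul _)) fun σ _ => ?_
        have hD := ringDistSq_pos ha.le hr.le har.ne' σ
        rw [ringKernel_eq_add_div hD.le]
        gcongr ?_ + ?_
        · exact (by ring : a * (a - r) / _ = _).le
        · exact sin_sq_div_ringDistSq_le hD
    _ = -(a * (r - a)) * (∫ σ in (0)..π / 2, (ringDistSq a r σ * √(ringDistSq a r σ))⁻¹)
          + 2⁻¹ * ∫ σ in (0)..π / 2, (√(ringDistSq a r σ))⁻¹ := by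
        rw [integral_add (hI₃.const_mul _) (hI₁.const_mul _), integral_const_mul,
          integral_const_mul]
    _ ≤ -(a * (r - a)) * (1 / ((1 + 4 * R * a) * √(1 + 4 * R * a) * (r - a) ^ 2))
          + 2⁻¹ * ((1 + π ^ 2 / (8 * a)) / √(r - a)) :=
        add_le_add (mul_le_mul_of_nonpos_left hI (neg_nonpos.2 (by positivity))) (by gcongr)
    _ = _ := by field_simp

lemma le_integral_ringKernel (ha : 0 < a) (hr : 0 < r) (hra : r < a) (hε : a - r ≤ π / 2) :
    a / ((1 + 4 * a * a) * √(1 + 4 * a * a)) / (a - r) ≤ ∫ σ in (0)..π / 2, ringKernel a r σ := by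
  have hε₀ : 0 < a - r := sub_pos.2 hra
  have hra' : |r - a| = a - r := by rw [abs_sub_comm, abs_of_pos hε₀]
  have hI := le_integral_inv_ringDistSq_mul_sqrt ha.le hr.le hra.le hra.ne (hra' ▸ hε)
  rw [hra'] at hI
  calc a / ((1 + 4 * a * a) * √(1 + 4 * a * a)) / (a - r)
      = a * (a - r) * (1 / ((1 + 4 * a * a) * √(1 + 4 * a * a) * (a - r) ^ 2)) := by
        field_simp
    _ ≤ a * (a - r) * ∫ σ in (0)..π / 2, (ringDistSq a r σ * √(ringDistSq a r σ))⁻¹ := by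
        gcongr
    _ = ∫ σ in (0)..π / 2, a * (a - r) * (ringDistSq a r σ * √(ringDistSq a r σ))⁻¹ := by
        rw [integral_const_mul]
    _ ≤ ∫ σ in (0)..π / 2, ringKernel a r σ := by
        refine integral_mono_on (by positivity)
          (((continuous_inv_ringDistSq_mul_sqrt ha.le hr.le hra.ne).intervalIntegrable _ _).const_mul _)
          ((continuous_ringKernel ha.le hr.le hra.ne).intervalIntegrable _ _) fun σ _ => ?_
        have hD := ringDistSq_pos ha.le hr.le hra.ne σ
        rw [ringKernel_eq_add_div hD.le, ← div_eq_mul_inv]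
        exact le_add_of_nonneg_right (by positivity)

lemma tendsto_neg_div_add_div_sqrt_atBot {A : ℝ} (hA : 0 < A) (B : ℝ) :
    Tendsto (fun x => -A / x + B / √x) (𝓝[>] 0) atBot := by
  have hcoef : Tendsto (fun x => -A + B * √x) (𝓝[>] 0) (𝓝 (-A)) := by
    have : Tendsto (fun x => -A + B * √x) (𝓝 0) (𝓝 (-A + B * √0)) :=
      (continuous_const.add (continuous_const.mul continuous_sqrt)).tendsto 0
    simpa using this.mono_left nhdsWithin_le_nhds
  refine (tendsto_inv_nhdsGT_zero.atTop_mul_neg (neg_lt_zero.2 hA) hcoef).congr' ?_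
  filter_upwards [self_mem_nhdsWithin] with x hx
  rw [show x⁻¹ * (-A + B * √x) = -A / x + B * (√x / x) by ring, sqrt_div_self']
  ring

lemma tendsto_integral_ringKernel_nhdsGT (ha : 0 < a) :
    Tendsto (fun r => ∫ σ in (0)..π / 2, ringKernel a r σ) (𝓝[>] a) atBot := by
  have hsub : Tendsto (· - a) (𝓝[>] a) (𝓝[>] 0) := by
    have := map_subRight_nhdsGT (c := a) (a := a)
    rw [sub_self] at this
    exact this.le
  refine tendsto_atBot_mono' _ ?_ ((tendsto_neg_div_add_div_sqrt_atBot
    (A := a / ((1 + 4 * (a + 1) * a) * √(1 + 4 * (a + 1) * a))) (by positivity)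
    ((1 + π ^ 2 / (8 * a)) / 2)).comp hsub)
  filter_upwards [Ioo_mem_nhdsGT (lt_add_one a)] with r hr
  exact integral_ringKernel_le ha hr.1 hr.2.le (by linarith [hr.2])

lemma tendsto_integral_ringKernel_nhdsLT (ha : 0 < a) :
    Tendsto (fun r => ∫ σ in (0)..π / 2, ringKernel a r σ) (𝓝[<] a) atTop := by
  have hsub : Tendsto (a - ·) (𝓝[<] a) (𝓝[>] 0) := by
    have := map_subLeft_nhdsLT (c := a) (a := a)
    rw [sub_self] at this
    exact this.le
  have hlim := (tendsto_inv_nhdsGT_zero.comp hsub).const_mul_atTop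
    (by positivity : 0 < a / ((1 + 4 * a * a) * √(1 + 4 * a * a)))
  refine tendsto_atTop_mono' _ ?_ hlim
  filter_upwards [Ioo_mem_nhdsLT (half_lt_self ha), Ioo_mem_nhdsLT (sub_one_lt a)] with r h₁ h₂
  exact le_integral_ringKernel ha (by linarith [h₁.1]) h₁.2 (by linarith [h₂.1, pi_gt_three])

lemma exists_eventually_abs_integral_ringKernel_le (ha : 0 < a) {c : ℝ} (hc : 0 < c)
    (hca : c ≠ a) : ∃ C, ∀ᶠ r in 𝓝 c, |∫ σ in (0)..π / 2, ringKernel a r σ| ≤ C := by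
  have hd : 0 < |c - a| := abs_pos.2 (sub_ne_zero.2 hca)
  refine ⟨a * (a + (c + 1)) / (|c - a| / 2) ^ 3 * |π / 2 - 0|, ?_⟩
  have hdist : ∀ᶠ r in 𝓝 c, |c - a| / 2 < |r - a| :=
    ((continuous_sub_right a).abs.tendsto c).eventually_const_lt (half_lt_self hd)
  filter_upwards [eventually_gt_nhds hc, eventually_lt_nhds (lt_add_one c), hdist]
    with r hr₀ hr₁ hr₂
  exact norm_integral_le_of_norm_le_const fun σ _ => (norm_eq_abs _).trans_le <|
    abs_ringKernel_le ha.le hr₀.le hr₁.le (half_pos hd) hr₂.le σ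

end Asymptotics

lemma integral_add_smul_ringKernel {a b r : ℝ} (ha : 0 < a) (hb : 0 < b) (hr : 0 < r)
    (hra : r ≠ a) (hrb : r ≠ b) (κ : ℝ) :
    ∫ σ in (0)..π / 2,
        (a * (a - r * cos (2 * σ)) / ((r - a) ^ 2 + 4 * r * a * sin σ ^ 2) ^ ((3 : ℝ) / 2)
          + κ * b * (b - r * cos (2 * σ)) / ((r - b) ^ 2 + 4 * r * b * sin σ ^ 2) ^ ((3 : ℝ) / 2))
      = (∫ σ in (0)..π / 2, ringKernel a r σ) + κ * ∫ σ in (0)..π / 2, ringKernel b r σ := by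
  rw [← integral_const_mul, ← integral_add
    ((continuous_ringKernel ha.le hr.le hra).intervalIntegrable _ _)
    (((continuous_ringKernel hb.le hr.le hrb).intervalIntegrable _ _).const_mul κ)]
  refine integral_congr fun σ _ => ?_
  simp only [ringKernel, ringDistSq]
  ring

/-- The function `Ξ` of (54) tends to `−∞` as `r → r̂₁⁺` and to `+∞` as `r → r̂₂⁻`. -/
theorem stmt11 (rh₁ rh₂ κ : ℝ) (h₁ : 0 < rh₁) (h₁₂ : rh₁ < rh₂) (hκ : 0 < κ) :
    Tendsto (fun r : ℝ => ∫ σ in (0:ℝ)..(π/2),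
        (rh₁ * (rh₁ - r * Real.cos (2 * σ)) /
            ((r - rh₁) ^ 2 + 4 * r * rh₁ * Real.sin σ ^ 2) ^ ((3:ℝ)/2)
          + κ * rh₂ * (rh₂ - r * Real.cos (2 * σ)) /
            ((r - rh₂) ^ 2 + 4 * r * rh₂ * Real.sin σ ^ 2) ^ ((3:ℝ)/2)))
      (𝓝[>] rh₁) atBot ∧
    Tendsto (fun r : ℝ => ∫ σ in (0:ℝ)..(π/2),
        (rh₁ * (rh₁ - r * Real.cos (2 * σ)) /
            ((r - rh₁) ^ 2 + 4 * r * rh₁ * Real.sin σ ^ 2) ^ ((3:ℝ)/2)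
          + κ * rh₂ * (rh₂ - r * Real.cos (2 * σ)) /
            ((r - rh₂) ^ 2 + 4 * r * rh₂ * Real.sin σ ^ 2) ^ ((3:ℝ)/2)))
      (𝓝[<] rh₂) atTop := by
  have h₂ : 0 < rh₂ := h₁.trans h₁₂
  have hΞ (r : ℝ) (hr : r ∈ Ioo rh₁ rh₂) :=
    (integral_add_smul_ringKernel h₁ h₂ (h₁.trans hr.1) hr.1.ne' hr.2.ne κ).symm
  obtain ⟨C₁, hC₁⟩ := exists_eventually_abs_integral_ringKernel_le h₁ h₂ h₁₂.ne'
  obtain ⟨C₂, hC₂⟩ := exists_eventually_abs_integral_ringKernel_le h₂ h₁ h₁₂.ne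
  constructor
  · refine (tendsto_atBot_add_right_of_ge' _ (κ * C₂) (tendsto_integral_ringKernel_nhdsGT h₁)
      (g := fun r => κ * ∫ σ in (0)..π / 2, ringKernel rh₂ r σ) ?_).congr' ?_
    · filter_upwards [nhdsWithin_le_nhds hC₂] with r hr
      exact mul_le_mul_of_nonneg_left ((le_abs_self _).trans hr) hκ.le
    · filter_upwards [Ioo_mem_nhdsGT h₁₂] with r hr using hΞ r hr
  · refine (tendsto_atTop_add_left_of_le' _ (-C₁)
      (f := fun r => ∫ σ in (0)..π / 2, ringKernel rh₁ r σ) ?_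
      ((tendsto_integral_ringKernel_nhdsLT h₂).const_mul_atTop hκ)).congr' ?_
    · filter_upwards [nhdsWithin_le_nhds hC₁] with r hr
      exact neg_le_of_abs_le hr
    · filter_upwards [Ioo_mem_nhdsLT h₁₂] with r hr using hΞ r hr
end

section
/- Let κ₁, κ₂ > 0, r₁, r₂ > 0 and x₁, x₂ ∈ ℝ with (r₁, x₁) ≠ (r₂, x₂), and let I := ∫₀^{π/2} cos(2σ) / Δ₁₂(σ)^{3/2} dσ. Then the two quantities ṡ₁ := 4 κ₂ r₁ r₂ (x₁ − x₂) I and ṡ₂ := 4 κ₁ r₁ r₂ (x₂ − x₁) I both vanish if and only if x₁ = x₂; that is, a necessary and sufficient condition for the radial velocities of both coaxial vortex rings to vanish is that the rings lie in a common plane x₁ = x₂ perpendicular to the axis of symmetry. -/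
open Real intervalIntegral

lemma I_pos_aux (r₁ r₂ x₁ x₂ : ℝ) (hr₁ : 0 < r₁) (hr₂ : 0 < r₂)
    (hc : 0 < (r₁ - r₂) ^ 2 + (x₁ - x₂) ^ 2) :
    0 < ∫ σ in (0:ℝ)..(π/2), Real.cos (2 * σ) /
      ((r₁ - r₂) ^ 2 + (x₁ - x₂) ^ 2 + 4 * r₁ * r₂ * Real.sin σ ^ 2) ^ ((3:ℝ)/2) := by
  have hπ := Real.pi_pos
  set c : ℝ := (r₁ - r₂) ^ 2 + (x₁ - x₂) ^ 2 with hcdef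
  set f : ℝ → ℝ := fun σ => Real.cos (2 * σ) /
      (c + 4 * r₁ * r₂ * Real.sin σ ^ 2) ^ ((3:ℝ)/2) with hf
  show 0 < ∫ σ in (0:ℝ)..(π/2), f σ
  have hΔpos : ∀ σ : ℝ, 0 < c + 4 * r₁ * r₂ * Real.sin σ ^ 2 := fun σ => by positivity
  have hΔcont : Continuous (fun σ : ℝ => c + 4 * r₁ * r₂ * Real.sin σ ^ 2) := by continuity
  have hfc : Continuous f := by
    apply Continuous.div (by continuity)
    · exact hΔcont.rpow_const (fun x => Or.inr (by norm_num))
    · exact fun σ => (Real.rpow_pos_of_pos (hΔpos σ) _).ne'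
  have hint : ∀ a b : ℝ, IntervalIntegrable f MeasureTheory.volume a b :=
    fun a b => hfc.intervalIntegrable a b
  have hgc : Continuous (fun σ : ℝ => f (π/2 - σ)) :=
    hfc.comp (by continuity)
  have hsplit : (∫ σ in (0:ℝ)..(π/2), f σ)
      = (∫ σ in (0:ℝ)..(π/4), f σ) + ∫ σ in (π/4:ℝ)..(π/2), f σ :=
    (intervalIntegral.integral_add_adjacent_intervals (hint _ _) (hint _ _)).symm
  have hrefl : (∫ σ in (0:ℝ)..(π/4), f (π/2 - σ)) = ∫ σ in (π/4:ℝ)..(π/2), f σ := by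
    rw [intervalIntegral.integral_comp_sub_left f (π/2)]
    rw [show π/2 - π/4 = π/4 from by ring, show π/2 - (0:ℝ) = π/2 from by ring]
  have hadd : (∫ σ in (0:ℝ)..(π/4), f σ) + (∫ σ in (0:ℝ)..(π/4), f (π/2 - σ))
      = ∫ σ in (0:ℝ)..(π/4), (f σ + f (π/2 - σ)) :=
    (intervalIntegral.integral_add (hint _ _) (hgc.intervalIntegrable _ _)).symm
  have hpos : 0 < ∫ σ in (0:ℝ)..(π/4), (f σ + f (π/2 - σ)) := by
    apply intervalIntegral.intervalIntegral_pos_of_pos_on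
    · exact (hfc.add hgc).intervalIntegrable _ _
    · intro σ hσ
      obtain ⟨hσ0, hσ4⟩ := hσ
      have hcos : 0 < Real.cos (2 * σ) :=
        Real.cos_pos_of_mem_Ioo ⟨by linarith, by linarith⟩
      have hsin : Real.sin σ < Real.sin (π/2 - σ) := by
        apply Real.strictMonoOn_sin ⟨by linarith, by linarith⟩ ⟨by linarith, by linarith⟩
        linarith
      have hsin0 : 0 ≤ Real.sin σ :=
        Real.sin_nonneg_of_nonneg_of_le_pi (le_of_lt hσ0) (by linarith)
      set A : ℝ := c + 4 * r₁ * r₂ * Real.sin σ ^ 2 with hA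
      set B : ℝ := c + 4 * r₁ * r₂ * Real.sin (π/2 - σ) ^ 2 with hB
      have hApos : 0 < A := hΔpos σ
      have hBpos : 0 < B := hΔpos (π/2 - σ)
      have hAltB : A < B := by
        have hsq : Real.sin σ ^ 2 < Real.sin (π/2 - σ) ^ 2 :=
          pow_lt_pow_left₀ hsin hsin0 (by norm_num)
        have := mul_lt_mul_of_pos_left hsq (by positivity : (0:ℝ) < 4 * r₁ * r₂)
        rw [hA, hB]
        linarith
      have hApow : 0 < A ^ ((3:ℝ)/2) := Real.rpow_pos_of_pos hApos _
      have hBpow : 0 < B ^ ((3:ℝ)/2) := Real.rpow_pos_of_pos hBpos _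
      have hpowlt : A ^ ((3:ℝ)/2) < B ^ ((3:ℝ)/2) :=
        Real.rpow_lt_rpow hApos.le hAltB (by norm_num)
      have hdiv : Real.cos (2 * σ) / B ^ ((3:ℝ)/2) < Real.cos (2 * σ) / A ^ ((3:ℝ)/2) :=
        div_lt_div_of_pos_left hcos hApow hpowlt
      have hval : f (π/2 - σ) = -(Real.cos (2 * σ)) / B ^ ((3:ℝ)/2) := by
        simp only [hf]
        rw [show 2 * (π/2 - σ) = π - 2 * σ from by ring, Real.cos_pi_sub]
      have hval2 : f σ = Real.cos (2 * σ) / A ^ ((3:ℝ)/2) := rfl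
      rw [hval, hval2, neg_div]
      linarith
    · linarith
  rw [hsplit, ← hrefl]
  linarith [hadd, hpos]

/-- The radial velocities `ṡ₁ = 4 κ₂ r₁ r₂ (x₁ − x₂) I` and `ṡ₂ = 4 κ₁ r₁ r₂ (x₂ − x₁) I`
of the two coaxial vortex rings both vanish if and only if `x₁ = x₂`, where
`I = ∫₀^{π/2} cos 2σ / Δ₁₂(σ)^{3/2} dσ`. -/
theorem stmt19 (κ₁ κ₂ r₁ r₂ x₁ x₂ : ℝ) (hκ₁ : 0 < κ₁) (hκ₂ : 0 < κ₂)
    (hr₁ : 0 < r₁) (hr₂ : 0 < r₂) (hne : (r₁, x₁) ≠ (r₂, x₂)) :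
    (4 * κ₂ * r₁ * r₂ * (x₁ - x₂) *
        (∫ σ in (0:ℝ)..(π/2), Real.cos (2 * σ) /
          ((r₁ - r₂) ^ 2 + (x₁ - x₂) ^ 2 + 4 * r₁ * r₂ * Real.sin σ ^ 2) ^ ((3:ℝ)/2)) = 0
      ∧ 4 * κ₁ * r₁ * r₂ * (x₂ - x₁) *
        (∫ σ in (0:ℝ)..(π/2), Real.cos (2 * σ) /
          ((r₁ - r₂) ^ 2 + (x₁ - x₂) ^ 2 + 4 * r₁ * r₂ * Real.sin σ ^ 2) ^ ((3:ℝ)/2)) = 0)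
    ↔ x₁ = x₂ := by
  have hc : 0 < (r₁ - r₂) ^ 2 + (x₁ - x₂) ^ 2 := by
    rcases eq_or_ne r₁ r₂ with h | h
    · rcases eq_or_ne x₁ x₂ with h2 | h2
      · exact absurd (by simp [h, h2]) hne
      · have h3 : x₁ - x₂ ≠ 0 := sub_ne_zero.mpr h2
        positivity
    · have h3 : r₁ - r₂ ≠ 0 := sub_ne_zero.mpr h
      positivity
  have hI := I_pos_aux r₁ r₂ x₁ x₂ hr₁ hr₂ hc
  constructor
  · rintro ⟨h1, -⟩
    by_contra hx
    have hx0 : x₁ - x₂ ≠ 0 := sub_ne_zero.mpr hx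
    exact (mul_ne_zero (mul_ne_zero (by positivity) hx0) hI.ne') h1
  · intro hx
    subst hx
    simp
end
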